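/- Let k be an even integer and m ≥ −k/2 an integer. The function θ ↦ kθ/2 + πm/2 − (πm/2)cosθ is continuous and strictly increasing on [0, π] when k ≥ 0 and m > 0, takes the value 0 at θ = 0 and kπ/2 + πm at θ = π; hence the function 2cos(kθ/2 + πm/2 − (πm/2)cosθ) attains the values ±2 alternately at least m + 1 + k/2 times on [0, π]. -/

import Mathlib

/-!
Since `cos` is strictly decreasing on `[0, π]`, the argument
`f θ = kθ/2 + πm/2 - (πm/2) cos θ` is strictly increasing there, from `f 0 = 0` to
`f π = kπ/2 + πm`. By the intermediate value theorem it passes through every multiple `jπ`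
with `0 ≤ j ≤ m + k/2`, at increasing points `θⱼ`, and `2 cos (jπ) = 2 (-1)ʲ`.
-/

open Real Set

lemma strictMonoOn_sub_mul_cos {g : ℝ → ℝ} (hg : Monotone g) {c : ℝ} (hc : 0 < c) :
    StrictMonoOn (fun θ => g θ - c * cos θ) (Icc 0 π) := by
  intro x hx y hy hxy
  have hcos : c * cos y < c * cos x := mul_lt_mul_of_pos_left (strictAntiOn_cos hx hy hxy) hc
  linarith [hg hxy.le]

lemma StrictMonoOn.exists_strictMono_preimage {ι : Type*} [Preorder ι] {f : ℝ → ℝ} {a b : ℝ}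
    (hab : a ≤ b) (hcont : ContinuousOn f (Icc a b)) (hmono : StrictMonoOn f (Icc a b))
    {y : ι → ℝ} (hy : StrictMono y) (hy_mem : ∀ i, y i ∈ Icc (f a) (f b)) :
    ∃ θs : ι → ℝ, StrictMono θs ∧ (∀ i, θs i ∈ Icc a b) ∧ ∀ i, f (θs i) = y i := by
  choose θs hθs_mem hθs_val using fun i => intermediate_value_Icc hab hcont (hy_mem i)
  refine ⟨θs, fun i j hij => ?_, hθs_mem, hθs_val⟩
  rw [← hmono.lt_iff_lt (hθs_mem i) (hθs_mem j), hθs_val, hθs_val]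
  exact hy hij

lemma natCast_mul_pi_mem_Icc {k m : ℤ} (j : Fin ((m + 1 + k / 2).toNat)) :
    (j : ℝ) * π ∈ Icc 0 (k * π / 2 + π * m) := by
  have hj : (j : ℤ) ≤ m + k / 2 := by omega
  have hk : ((k / 2 : ℤ) : ℝ) ≤ k / 2 := by
    rw [le_div_iff₀ two_pos]
    exact_mod_cast Int.ediv_mul_le k two_ne_zero
  have hjr : (j : ℝ) ≤ m + k / 2 := by
    calc (j : ℝ) = ((j : ℤ) : ℝ) := rfl
      _ ≤ m + ((k / 2 : ℤ) : ℝ) := by exact_mod_cast hj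
      _ ≤ m + k / 2 := by linarith
  refine ⟨by positivity, ?_⟩
  nlinarith [pi_pos]

theorem cosine_argument_increasing_and_alternates_general (k m : ℤ)
    (hk0 : 0 ≤ k) (hm : 0 < m) :
    ContinuousOn (fun θ : ℝ => (k : ℝ) * θ / 2 + π * m / 2 - π * m / 2 * Real.cos θ)
        (Icc 0 π) ∧
      StrictMonoOn (fun θ : ℝ => (k : ℝ) * θ / 2 + π * m / 2 - π * m / 2 * Real.cos θ)
        (Icc 0 π) ∧
      ((k : ℝ) * 0 / 2 + π * m / 2 - π * m / 2 * Real.cos 0 = 0) ∧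
      ((k : ℝ) * π / 2 + π * m / 2 - π * m / 2 * Real.cos π = k * π / 2 + π * m) ∧
      ∃ θs : Fin ((m + 1 + k / 2).toNat) → ℝ, StrictMono θs ∧
        (∀ j, θs j ∈ Icc 0 π) ∧
        ∀ j, 2 * Real.cos ((k : ℝ) * θs j / 2 + π * m / 2 - π * m / 2 * Real.cos (θs j)) =
          2 * (-1 : ℝ) ^ (j : ℕ) := by
  set f : ℝ → ℝ := fun θ => (k : ℝ) * θ / 2 + π * m / 2 - π * m / 2 * Real.cos θ
  have hcont : ContinuousOn f (Icc 0 π) := by fun_prop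
  have hlin : Monotone fun θ : ℝ => (k : ℝ) * θ / 2 + π * m / 2 := fun x y hxy => by
    have : (0 : ℝ) ≤ k := by exact_mod_cast hk0
    dsimp only
    gcongr
  have hmono : StrictMonoOn f (Icc 0 π) := by
    have : (0 : ℝ) < m := by exact_mod_cast hm
    exact strictMonoOn_sub_mul_cos hlin (by positivity)
  have hf0 : f 0 = 0 := by simp [f]
  have hfπ : f π = k * π / 2 + π * m := by simp only [f, cos_pi]; ring
  obtain ⟨θs, hθs, hθs_mem, hθs_val⟩ := hmono.exists_strictMono_preimage pi_pos.le hcont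
    (y := fun j : Fin ((m + 1 + k / 2).toNat) => (j : ℝ) * π)
    (fun i j hij => mul_lt_mul_of_pos_right (by exact_mod_cast hij) pi_pos)
    (fun j => by rw [hf0, hfπ]; exact natCast_mul_pi_mem_Icc j)
  refine ⟨hcont, hmono, hf0, hfπ, θs, hθs, hθs_mem, fun j => ?_⟩
  change 2 * cos (f (θs j)) = _
  rw [hθs_val, cos_nat_mul_pi]

theorem cosine_argument_increasing_and_alternates (k m : ℤ) (hk : Even k)
    (hk0 : 0 ≤ k) (hm : 0 < m) (hmk : -(k / 2) ≤ m) :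
    ContinuousOn (fun θ : ℝ => (k : ℝ) * θ / 2 + π * m / 2 - π * m / 2 * Real.cos θ)
        (Icc 0 π) ∧
      StrictMonoOn (fun θ : ℝ => (k : ℝ) * θ / 2 + π * m / 2 - π * m / 2 * Real.cos θ)
        (Icc 0 π) ∧
      ((k : ℝ) * 0 / 2 + π * m / 2 - π * m / 2 * Real.cos 0 = 0) ∧
      ((k : ℝ) * π / 2 + π * m / 2 - π * m / 2 * Real.cos π = k * π / 2 + π * m) ∧
      ∃ θs : Fin ((m + 1 + k / 2).toNat) → ℝ, StrictMono θs ∧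
        (∀ j, θs j ∈ Icc 0 π) ∧
        ∀ j, 2 * Real.cos ((k : ℝ) * θs j / 2 + π * m / 2 - π * m / 2 * Real.cos (θs j)) =
          2 * (-1 : ℝ) ^ (j : ℕ) :=
  cosine_argument_increasing_and_alternates_general k m hk0 hm
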